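/- Let ∗ be a finite character star-operation on a domain D and let A be a P-∗-afg-homogeneous ideal of D. Then some positive power (A^n)_∗ is a principal ideal of D. -/

import Mathlib

open FractionalIdeal

variable (D : Type*) (K : Type*) [CommRing D] [IsDomain D] [Field K] [Algebra D K]
  [IsFractionRing D K]

/-- A finite character star-operation on the integral domain `D`, acting on the
nonzero fractional ideals of `D` inside its quotient field `K`. -/
structure StarOperation where
  star : FractionalIdeal (nonZeroDivisors D) K → FractionalIdeal (nonZeroDivisors D) K
  star_principal : ∀ x : K, x ≠ 0 →
    star (spanSingleton (nonZeroDivisors D) x) = spanSingleton (nonZeroDivisors D) x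
  star_smul : ∀ (x : K) (A : FractionalIdeal (nonZeroDivisors D) K), x ≠ 0 → A ≠ 0 →
    star (spanSingleton (nonZeroDivisors D) x * A) = spanSingleton (nonZeroDivisors D) x * star A
  le_star : ∀ A, A ≠ 0 → A ≤ star A
  star_mono : ∀ A B, A ≠ 0 → B ≠ 0 → A ≤ B → star A ≤ star B
  star_star : ∀ A, A ≠ 0 → star (star A) = star A
  finite_character : ∀ A, A ≠ 0 → ∀ x ∈ star A,
    ∃ B : FractionalIdeal (nonZeroDivisors D) K,
      B ≠ 0 ∧ B ≤ A ∧ (B : Submodule D K).FG ∧ x ∈ star B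

/-- A prime ideal of height one: a nonzero prime with no nonzero prime strictly below it. -/
def HeightOnePrime (P : Ideal D) : Prop :=
  P.IsPrime ∧ P ≠ ⊥ ∧ ∀ Q : Ideal D, Q.IsPrime → Q < P → Q = ⊥

/-- Membership of `x : K` in the localization `D_P` viewed inside `K`. -/
def MemLocAt (P : Ideal D) (x : K) : Prop :=
  ∃ a t : D, t ∉ P ∧ x * algebraMap D K t = algebraMap D K a

/-- An almost valuation ring: for nonzero `a, b` some power `a^n` divides `b^n` or
conversely. -/
def AVRing (R : Type*) [CommRing R] : Prop :=
  ∀ a b : R, a ≠ 0 → b ≠ 0 → ∃ n : ℕ, 0 < n ∧ (a ^ n ∣ b ^ n ∨ b ^ n ∣ a ^ n)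

/-- The `v`-operation `A ↦ (A⁻¹)⁻¹` on fractional ideals. -/
noncomputable def vOp (A : FractionalIdeal (nonZeroDivisors D) K) : FractionalIdeal (nonZeroDivisors D) K :=
  (A⁻¹)⁻¹

/-- An integral ideal is a `t`-ideal if it contains `B_v` for every nonzero finitely
generated subideal `B`. -/
def IsTIdeal (I : Ideal D) : Prop :=
  ∀ B : Ideal D, B ≠ ⊥ → B.FG → B ≤ I →
    vOp D K (B : FractionalIdeal (nonZeroDivisors D) K) ≤ (I : FractionalIdeal (nonZeroDivisors D) K)

/-- Maximal `t`-ideals. -/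
def IsTMax (P : Ideal D) : Prop :=
  P ≠ ⊥ ∧ P ≠ ⊤ ∧ IsTIdeal D K P ∧
    ∀ J : Ideal D, J ≠ ⊤ → IsTIdeal D K J → P ≤ J → J = P

/-- An integral ideal is a `w`-ideal if it contains every `x ∈ K` with `xJ ⊆ I` for
some finitely generated ideal `J` with `J⁻¹ = D`. -/
def IsWIdeal (I : Ideal D) : Prop :=
  ∀ x : K, (∃ J : Ideal D, J.FG ∧ ((J : FractionalIdeal (nonZeroDivisors D) K))⁻¹ = 1 ∧
      spanSingleton (nonZeroDivisors D) x * (J : FractionalIdeal (nonZeroDivisors D) K) ≤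
        (I : FractionalIdeal (nonZeroDivisors D) K)) →
    x ∈ (I : FractionalIdeal (nonZeroDivisors D) K)

/-- Maximal `w`-ideals. -/
def IsWMax (P : Ideal D) : Prop :=
  P ≠ ⊥ ∧ P ≠ ⊤ ∧ IsWIdeal D K P ∧
    ∀ J : Ideal D, J ≠ ⊤ → IsWIdeal D K J → P ≤ J → J = P

/-- `P ∈ Ass(K/D)`: `P` is a prime minimal over a conductor ideal `(aD : bD)`. -/
def InAssKD (P : Ideal D) : Prop :=
  P.IsPrime ∧ ∃ a b : D, a ≠ 0 ∧ b ≠ 0 ∧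
    (Ideal.span {a}).colon (Ideal.span {b}) ≤ P ∧
    ∀ Q : Ideal D, Q.IsPrime → (Ideal.span {a}).colon (Ideal.span {b}) ≤ Q → Q ≤ P → Q = P

/-- An AGCD (almost GCD) domain: for all nonzero `a, b` there is `n ≥ 1` with
`(aⁿ, bⁿ)_v` principal. -/
def IsAGCDDomain : Prop :=
  ∀ a b : D, a ≠ 0 → b ≠ 0 → ∃ n : ℕ, 0 < n ∧ ∃ d : D,
    vOp D K ((Ideal.span {a ^ n, b ^ n} : Ideal D) : FractionalIdeal (nonZeroDivisors D) K) =
      spanSingleton (nonZeroDivisors D) (algebraMap D K d)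

/-- `D_P` is an almost valuation domain, for `P` a prime of `D`. -/
def AVAtPrime {D : Type*} [CommRing D] (P : Ideal D) (hP : P.IsPrime) : Prop :=
  AVRing (Localization (@Ideal.primeCompl D _ P hP))

namespace StarOperation

variable {D K}
variable (s : StarOperation D K)

/-- The star closure of an integral ideal, as an integral ideal. -/
def starI (I : Ideal D) : Ideal D :=
  (s.star (I : FractionalIdeal (nonZeroDivisors D) K) : Submodule D K).comap
    (Algebra.linearMap D K)

/-- An integral `∗`-ideal. -/
def IsStarIdeal (I : Ideal D) : Prop :=
  s.star (I : FractionalIdeal (nonZeroDivisors D) K) = (I : FractionalIdeal (nonZeroDivisors D) K)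

/-- A maximal `∗`-ideal: maximal among proper integral `∗`-ideals (such ideals are prime). -/
def IsMaxStarIdeal (P : Ideal D) : Prop :=
  P ≠ ⊥ ∧ P ≠ ⊤ ∧ P.IsPrime ∧ s.IsStarIdeal P ∧
    ∀ J : Ideal D, J ≠ ⊤ → s.IsStarIdeal J → P ≤ J → J = P

/-- `∗`-invertibility of a fractional ideal. -/
def IsStarInvertible (A : FractionalIdeal (nonZeroDivisors D) K) : Prop :=
  s.star (A * A⁻¹) = 1

/-- `∗`-invertibility of an integral ideal. -/
def IsStarInvertibleI (I : Ideal D) : Prop :=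
  s.IsStarInvertible (I : FractionalIdeal (nonZeroDivisors D) K)

/-- A `P`-`∗`-homogeneous ideal: nonzero, finitely generated, contained in the maximal
`∗`-ideal `P` and in no other maximal `∗`-ideal. -/
def IsHomogeneous (P I : Ideal D) : Prop :=
  I ≠ ⊥ ∧ I.FG ∧ s.IsMaxStarIdeal P ∧ I ≤ P ∧
    ∀ Q : Ideal D, s.IsMaxStarIdeal Q → I ≤ Q → Q = P

/-- A type 1 `∗`-homogeneous ideal: `M(A) = √(A_∗)`. -/
def IsType1 (P I : Ideal D) : Prop := P = (s.starI I).radical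

/-- A type 2 `∗`-homogeneous ideal: `A_∗ = (M(A)ⁿ)_∗` for some `n ≥ 1`. -/
def IsType2 (P I : Ideal D) : Prop :=
  ∃ n : ℕ, 0 < n ∧
    s.star (I : FractionalIdeal (nonZeroDivisors D) K) =
      s.star ((P ^ n : Ideal D) : FractionalIdeal (nonZeroDivisors D) K)

/-- A `P`-`∗`-almost super-homogeneous ideal. -/
def IsAlmostSuperHomogeneous (P I : Ideal D) : Prop :=
  s.IsStarInvertibleI I ∧ s.IsHomogeneous P I ∧
    ∀ (k : ℕ) (b : Fin k → D), (∀ i, b i ∈ P) →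
      (∃ r : ℕ, 0 < r ∧ ((I ^ r : Ideal D) : FractionalIdeal (nonZeroDivisors D) K) ≤
        s.star ((Ideal.span (Set.range b) : Ideal D) : FractionalIdeal (nonZeroDivisors D) K)) →
      ∃ n : ℕ, 0 < n ∧ s.IsStarInvertibleI (Ideal.span (Set.range fun i => b i ^ n))

/-- A `∗`-super-homogeneous ideal: every `∗`-homogeneous ideal containing it is
`∗`-invertible. -/
def IsSuperHomogeneous (P I : Ideal D) : Prop :=
  s.IsHomogeneous P I ∧
    ∀ B Q : Ideal D, s.IsHomogeneous Q B → I ≤ B → s.IsStarInvertibleI B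

/-- A `P`-`∗`-afg-homogeneous (almost factorial general homogeneous) ideal. -/
def IsAfgHomogeneous (P I : Ideal D) : Prop :=
  s.IsStarInvertibleI I ∧ s.IsHomogeneous P I ∧
    ∀ (k : ℕ) (b : Fin k → D), (∀ i, b i ∈ P) →
      (∃ r : ℕ, 0 < r ∧ ((I ^ r : Ideal D) : FractionalIdeal (nonZeroDivisors D) K) ≤
        s.star ((Ideal.span (Set.range b) : Ideal D) : FractionalIdeal (nonZeroDivisors D) K)) →
      ∃ n : ℕ, 0 < n ∧ ∃ d : D,
        s.star ((Ideal.span (Set.range fun i => b i ^ n) : Ideal D) :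
            FractionalIdeal (nonZeroDivisors D) K) =
          spanSingleton (nonZeroDivisors D) (algebraMap D K d)

/-- A `∗`-af-homogeneous ideal: every `∗`-homogeneous ideal containing it has a power
whose `∗`-closure is principal. -/
def IsAfHomogeneous (P I : Ideal D) : Prop :=
  s.IsHomogeneous P I ∧
    ∀ B Q : Ideal D, s.IsHomogeneous Q B → I ≤ B →
      ∃ n : ℕ, 0 < n ∧ ∃ d : D,
        s.star ((B ^ n : Ideal D) : FractionalIdeal (nonZeroDivisors D) K) =
          spanSingleton (nonZeroDivisors D) (algebraMap D K d)

/-- `D` is a `∗`-SH domain with respect to a property of ideals: every nonzero proper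
principal ideal is a `∗`-product of ideals with the given property. -/
def IsSHWith (prop : Ideal D → Prop) : Prop :=
  ∀ x : D, x ≠ 0 → ¬IsUnit x →
    ∃ (k : ℕ) (A : Fin k → Ideal D), (∀ i, prop (A i)) ∧
      s.star ((∏ i, A i : Ideal D) : FractionalIdeal (nonZeroDivisors D) K) =
        ((Ideal.span {x} : Ideal D) : FractionalIdeal (nonZeroDivisors D) K)

/-- A `∗`-almost super-SH domain. -/
def IsAlmostSuperSH : Prop :=
  s.IsSHWith fun I => ∃ P, s.IsAlmostSuperHomogeneous P I

/-- Finite character: every nonzero nonunit lies in only finitely many maximal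
`∗`-ideals. -/
def FiniteCharacterDom : Prop :=
  ∀ x : D, x ≠ 0 → ¬IsUnit x → {P : Ideal D | s.IsMaxStarIdeal P ∧ x ∈ P}.Finite

/-- Independence: no two distinct maximal `∗`-ideals contain a common nonzero prime. -/
def IndependentDom : Prop :=
  ∀ P Q : Ideal D, s.IsMaxStarIdeal P → s.IsMaxStarIdeal Q → P ≠ Q →
    ∀ L : Ideal D, L.IsPrime → L ≠ ⊥ → ¬(L ≤ P ∧ L ≤ Q)

/-- A `∗`-h-local domain. -/
def IsHLocal : Prop := s.FiniteCharacterDom ∧ s.IndependentDom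

/-- A `∗`-almost independent ring of Krull type. -/
def IsAlmostIRKT : Prop :=
  s.IsHLocal ∧ ∀ (P : Ideal D) (h : s.IsMaxStarIdeal P), AVAtPrime P h.2.2.1

/-- A `∗`-almost generalized Krull domain. -/
def IsAGKD : Prop :=
  (∀ x : K, (∀ P : Ideal D, HeightOnePrime D P → MemLocAt D K P x) →
      ∃ d : D, algebraMap D K d = x) ∧
  (∀ x : D, x ≠ 0 → ¬IsUnit x → {P : Ideal D | HeightOnePrime D P ∧ x ∈ P}.Finite) ∧
  (∀ P : Ideal D, s.IsMaxStarIdeal P ↔ HeightOnePrime D P) ∧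
  (∀ (P : Ideal D) (h : s.IsMaxStarIdeal P), AVAtPrime P h.2.2.1)

/-- A `∗`-Krull domain: `∗`-h-local, `∗-Max(D) = X⁽¹⁾(D)`, and `D_P` is a DVR for each
maximal `∗`-ideal `P`. -/
def IsStarKrull : Prop :=
  s.IsHLocal ∧ (∀ P : Ideal D, s.IsMaxStarIdeal P ↔ HeightOnePrime D P) ∧
    ∀ (P : Ideal D) (h : s.IsMaxStarIdeal P),
      @IsDiscreteValuationRing (Localization (@Ideal.primeCompl D _ P h.2.2.1)) _
        (IsLocalization.isDomain_localization (@Ideal.primeCompl_le_nonZeroDivisors D _ _ P h.2.2.1))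

/-- A `∗`-almost Bézout domain. -/
def IsAlmostBezout : Prop :=
  ∀ a b : D, a ≠ 0 → b ≠ 0 → ∃ n : ℕ, 0 < n ∧ ∃ d : D,
    s.star ((Ideal.span {a ^ n, b ^ n} : Ideal D) : FractionalIdeal (nonZeroDivisors D) K) =
      spanSingleton (nonZeroDivisors D) (algebraMap D K d)

/-- The `∗`-class group `Cl_∗(D)` is torsion: every `∗`-invertible fractional ideal has a
power whose `∗`-closure is principal. -/
def HasTorsionClassGroup : Prop :=
  ∀ A : FractionalIdeal (nonZeroDivisors D) K, A ≠ 0 → s.IsStarInvertible A →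
    ∃ n : ℕ, 0 < n ∧ ∃ x : K, s.star (A ^ n) = spanSingleton (nonZeroDivisors D) x

end StarOperation

variable {D : Type*} {K : Type*} [CommRing D] [IsDomain D] [Field K] [Algebra D K]
  [IsFractionRing D K]

open StarOperation

/-!
Write `I = (b₁, …, b_k)`. Since `I ⊆ I_∗`, the afg condition applies with `r = 1` and gives `n`
with `(b₁ⁿ, …, b_kⁿ)_∗` principal, so it suffices that `(Iⁿ)_∗ = (b₁ⁿ, …, b_kⁿ)_∗`. One
inclusion is clear. For the other, expanding powers of a sum of ideals gives
`I^(n+m) ⊆ (b₁ⁿ, …, b_kⁿ) I^m` for some `m`, and since `I` is `∗`-invertible the factor `I^m`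
cancels once `∗` is applied.
-/

section IdealPowers

variable {R : Type*} [CommSemiring R]

theorem Ideal.add_pow_add_le (I J : Ideal R) (n m : ℕ) :
    (I + J) ^ (n + m) ≤ I ^ n * (I + J) ^ m + J ^ m * (I + J) ^ n := by
  rw [add_pow, Ideal.sum_eq_sup]
  refine Finset.sup_le fun i hi => Ideal.mul_le_left.trans ?_
  have hin : i ≤ n + m := Nat.lt_succ_iff.mp (Finset.mem_range.mp hi)
  by_cases hni : n ≤ i
  · obtain ⟨a, rfl⟩ := Nat.exists_eq_add_of_le hni
    refine le_trans ?_ le_sup_left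
    rw [pow_add, mul_assoc]
    refine Ideal.mul_mono_right ?_
    calc I ^ a * J ^ (n + m - (n + a)) ≤ (I + J) ^ a * (I + J) ^ (n + m - (n + a)) :=
          Ideal.mul_mono (Ideal.pow_right_mono le_sup_left _) (Ideal.pow_right_mono le_sup_right _)
      _ = (I + J) ^ m := by rw [← pow_add]; congr 1; omega
  · obtain ⟨a, ha⟩ : ∃ a, n + m - i = m + a := ⟨n - i, by omega⟩
    refine le_trans ?_ le_sup_right
    rw [ha, pow_add, mul_comm, mul_assoc]
    refine Ideal.mul_mono_right ?_
    calc J ^ a * I ^ i ≤ (I + J) ^ a * (I + J) ^ i :=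
          Ideal.mul_mono (Ideal.pow_right_mono le_sup_right _) (Ideal.pow_right_mono le_sup_left _)
      _ = (I + J) ^ n := by rw [← pow_add]; congr 1; omega

theorem Ideal.exists_sum_pow_add_le {ι : Type*} (s : Finset ι) (A : ι → Ideal R) {n : ℕ}
    (hn : n ≠ 0) :
    ∃ m, (∑ i ∈ s, A i) ^ (n + m) ≤ (∑ i ∈ s, A i ^ n) * (∑ i ∈ s, A i) ^ m := by
  classical
  induction s using Finset.induction_on with
  | empty => exact ⟨0, by simp [hn]⟩
  | insert a s ha ih =>
    obtain ⟨m, hm⟩ := ih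
    refine ⟨n + m, ?_⟩
    rw [Finset.sum_insert ha, Finset.sum_insert ha]
    set X := A a + ∑ i ∈ s, A i
    have hs : (∑ i ∈ s, A i) ^ (n + m) * X ^ n ≤ (∑ i ∈ s, A i ^ n) * X ^ (n + m) :=
      calc (∑ i ∈ s, A i) ^ (n + m) * X ^ n
          ≤ (∑ i ∈ s, A i ^ n) * (∑ i ∈ s, A i) ^ m * X ^ n := Ideal.mul_mono_left hm
        _ ≤ (∑ i ∈ s, A i ^ n) * X ^ m * X ^ n :=
          Ideal.mul_mono_left (Ideal.mul_mono_right (Ideal.pow_right_mono le_add_self _))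
        _ = (∑ i ∈ s, A i ^ n) * X ^ (n + m) := by rw [mul_assoc, ← pow_add, add_comm m]
    calc X ^ (n + (n + m)) ≤ A a ^ n * X ^ (n + m) + (∑ i ∈ s, A i) ^ (n + m) * X ^ n :=
          Ideal.add_pow_add_le _ _ _ _
      _ ≤ A a ^ n * X ^ (n + m) + (∑ i ∈ s, A i ^ n) * X ^ (n + m) := add_le_add_right hs _
      _ = (A a ^ n + ∑ i ∈ s, A i ^ n) * X ^ (n + m) := (add_mul _ _ _).symm

theorem Ideal.exists_span_range_pow_add_le {ι : Type*} [Finite ι] (b : ι → R) {n : ℕ}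
    (hn : n ≠ 0) :
    ∃ m, Ideal.span (Set.range b) ^ (n + m) ≤
      Ideal.span (Set.range fun i => b i ^ n) * Ideal.span (Set.range b) ^ m := by
  have := Fintype.ofFinite ι
  have hspan (c : ι → R) : Ideal.span (Set.range c) = ∑ i, Ideal.span {c i} := by
    rw [Ideal.span_range_eq_iSup, ← Finset.sup_univ_eq_iSup, ← Ideal.sum_eq_sup]
  simp only [hspan, ← Ideal.span_singleton_pow]
  exact Ideal.exists_sum_pow_add_le _ _ hn

end IdealPowers

section StarOperationLemmas

variable {R L : Type*} [CommRing R] [Field L] [Algebra R L]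

instance : NoZeroDivisors (FractionalIdeal (nonZeroDivisors R) L) where
  eq_zero_or_eq_zero_of_mul_eq_zero {A B} h := by
    simp only [FractionalIdeal.eq_zero_iff] at h ⊢
    by_contra! ⟨⟨a, ha, ha0⟩, b, hb, hb0⟩
    exact mul_ne_zero ha0 hb0 (h _ (FractionalIdeal.mul_mem_mul ha hb))

variable [IsFractionRing R L]

namespace StarOperation

variable (s : StarOperation R L)

theorem star_ne_zero {A : FractionalIdeal (nonZeroDivisors R) L} (hA : A ≠ 0) : s.star A ≠ 0 :=
  fun h => hA (FractionalIdeal.le_zero_iff.mp (h ▸ s.le_star A hA))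

theorem star_one : s.star 1 = 1 := by
  simpa using s.star_principal 1 one_ne_zero

theorem mul_star_le_star_mul {A B : FractionalIdeal (nonZeroDivisors R) L} (hB : B ≠ 0) :
    A * s.star B ≤ s.star (A * B) := by
  rw [FractionalIdeal.mul_le]
  intro a ha b hb
  rcases eq_or_ne a 0 with rfl | ha0
  · rw [zero_mul]
    exact zero_mem (s.star (A * B) : Submodule R L)
  have hA : A ≠ 0 := fun h => ha0 ((FractionalIdeal.mem_zero_iff _).mp (h ▸ ha))
  rw [← FractionalIdeal.spanSingleton_le_iff_mem] at ha
  have hab : a * b ∈ s.star (FractionalIdeal.spanSingleton _ a * B) := by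
    rw [s.star_smul a B ha0 hB]
    exact FractionalIdeal.mul_mem_mul (FractionalIdeal.mem_spanSingleton_self _ a) hb
  exact s.star_mono _ _ (mul_ne_zero (FractionalIdeal.spanSingleton_ne_zero_iff.mpr ha0) hB)
    (mul_ne_zero hA hB) (mul_le_mul_left ha B) hab

theorem star_mul_star {A B : FractionalIdeal (nonZeroDivisors R) L} (hA : A ≠ 0) (hB : B ≠ 0) :
    s.star (A * s.star B) = s.star (A * B) := by
  have hAB : A * B ≠ 0 := mul_ne_zero hA hB
  have hAsB : A * s.star B ≠ 0 := mul_ne_zero hA (s.star_ne_zero hB)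
  refine le_antisymm ?_ (s.star_mono _ _ hAB hAsB (mul_le_mul_right (s.le_star B hB) A))
  simpa only [s.star_star _ hAB] using
    s.star_mono _ _ hAsB (s.star_ne_zero hAB) (s.mul_star_le_star_mul hB)

theorem star_pow_eq_one {A : FractionalIdeal (nonZeroDivisors R) L} (hA : A ≠ 0)
    (h : s.star A = 1) (m : ℕ) : s.star (A ^ m) = 1 := by
  induction m with
  | zero => rw [pow_zero, s.star_one]
  | succ m ih =>
    rw [pow_succ', ← s.star_mul_star hA (pow_ne_zero m hA), ih, mul_one, h]

theorem star_le_star_of_mul_le_mul_left {X Y A B : FractionalIdeal (nonZeroDivisors R) L}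
    (hXY : s.star (X * Y) = 1) (hXY0 : X * Y ≠ 0) (hA : A ≠ 0) (hB : B ≠ 0)
    (h : X * A ≤ X * B) : s.star A ≤ s.star B := by
  obtain ⟨hX, hY⟩ := mul_ne_zero_iff.mp hXY0
  have cancel (C : FractionalIdeal (nonZeroDivisors R) L) (hC : C ≠ 0) :
      s.star C = s.star (Y * (X * C)) :=
    calc s.star C = s.star (C * s.star (X * Y)) := by rw [hXY, mul_one]
      _ = s.star (Y * (X * C)) := by rw [s.star_mul_star hC hXY0]; congr 1; ring
  rw [cancel A hA, cancel B hB]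
  exact s.star_mono _ _ (mul_ne_zero hY (mul_ne_zero hX hA)) (mul_ne_zero hY (mul_ne_zero hX hB))
    (mul_le_mul_right h Y)

end StarOperation

end StarOperationLemmas

namespace StarOperation

variable (s : StarOperation D K)

theorem star_pow_eq_star_of_pow_add_le {X J : FractionalIdeal (nonZeroDivisors D) K}
    (hX : s.IsStarInvertible X) (hX0 : X ≠ 0) {n m : ℕ} (hn : n ≠ 0) (hJX : J ≤ X ^ n)
    (hXJ : X ^ (n + m) ≤ J * X ^ m) : s.star (X ^ n) = s.star J := by
  have hJ0 : J ≠ 0 := by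
    rintro rfl
    rw [zero_mul, FractionalIdeal.le_zero_iff, pow_eq_zero_iff (by omega)] at hXJ
    exact hX0 hXJ
  have hXX : X * X⁻¹ ≠ 0 := (FractionalIdeal.bot_lt_mul_inv hX0).ne'
  refine le_antisymm ?_ (s.star_mono _ _ hJ0 (pow_ne_zero n hX0) hJX)
  refine s.star_le_star_of_mul_le_mul_left (X := X ^ m) (Y := X⁻¹ ^ m)
    (by rw [← mul_pow]; exact s.star_pow_eq_one hXX hX m)
    (by rw [← mul_pow]; exact pow_ne_zero m hXX)
    (pow_ne_zero n hX0) hJ0 ?_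
  rwa [← pow_add, add_comm, mul_comm]

theorem star_span_range_pow {ι : Type*} [Finite ι] {b : ι → D}
    (hI : s.IsStarInvertibleI (Ideal.span (Set.range b))) (hI0 : Ideal.span (Set.range b) ≠ ⊥)
    {n : ℕ} (hn : n ≠ 0) :
    s.star ((Ideal.span (Set.range b) ^ n : Ideal D) : FractionalIdeal (nonZeroDivisors D) K) =
      s.star ((Ideal.span (Set.range fun i => b i ^ n) : Ideal D) :
        FractionalIdeal (nonZeroDivisors D) K) := by
  obtain ⟨m, hm⟩ := Ideal.exists_span_range_pow_add_le b hn
  have hJI : Ideal.span (Set.range fun i => b i ^ n) ≤ Ideal.span (Set.range b) ^ n := by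
    rw [Ideal.span_le]
    rintro _ ⟨i, rfl⟩
    exact Ideal.pow_mem_pow (Ideal.subset_span (Set.mem_range_self i)) n
  rw [FractionalIdeal.coeIdeal_pow]
  refine s.star_pow_eq_star_of_pow_add_le hI (FractionalIdeal.coeIdeal_ne_zero.mpr hI0) hn
    (m := m) ?_ ?_ <;>
  simpa only [← FractionalIdeal.coeIdeal_pow, ← FractionalIdeal.coeIdeal_mul,
    FractionalIdeal.coeIdeal_le_coeIdeal]

end StarOperation

theorem stmt12 (s : StarOperation D K) (P I : Ideal D)
    (h : s.IsAfgHomogeneous P I) :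
    ∃ n : ℕ, 0 < n ∧ ∃ d : D,
      s.star ((I ^ n : Ideal D) : FractionalIdeal (nonZeroDivisors D) K) =
        FractionalIdeal.spanSingleton (nonZeroDivisors D) (algebraMap D K d) := by
  obtain ⟨hInv, ⟨hI0, hFG, -, hIP, -⟩, hafg⟩ := h
  obtain ⟨k, b, rfl⟩ := Submodule.fg_iff_exists_fin_generating_family.mp hFG
  have hbP (i : Fin k) : b i ∈ P := hIP (Ideal.subset_span ⟨i, rfl⟩)
  obtain ⟨n, hn, d, hd⟩ := hafg k b hbP
    ⟨1, one_pos, by rw [pow_one]; exact s.le_star _ (FractionalIdeal.coeIdeal_ne_zero.mpr hI0)⟩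
  exact ⟨n, hn, d, (s.star_span_range_pow hInv hI0 hn.ne').trans hd⟩
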